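/- Let n ≥ 1, m ∈ ℝ, r ≥ 0, and let p : ℤⁿ → ℂ be a symbol of order m. Then: (i) if p(D) is GH-r, then p(D) is GS-r; (ii) if the set {ξ ∈ ℤⁿ : p(ξ) = 0} is finite, then p(D) is GH-r if and only if p(D) is GS-r; (iii) if p(D) is GH-r₀ for some r₀ ≥ 0, then for every s ≥ 0, p(D) is GH-s if and only if p(D) is GS-s (hence the global hypoellipticity and global solvability indices coincide). -/

import Mathlib

open scoped BigOperators

/-- `|ξ| = Σⱼ |ξⱼ|`. -/
noncomputable def l1norm {n : ℕ} (ξ : Fin n → ℤ) : ℝ := ∑ j, |(ξ j : ℝ)|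

/-- `‖ξ‖² = Σⱼ ξⱼ²`. -/
noncomputable def l2normSq {n : ℕ} (ξ : Fin n → ℤ) : ℝ := ∑ j, ((ξ j : ℝ)) ^ 2

/-- `u ∈ H^k(𝕋ⁿ)` in terms of its Fourier coefficients. -/
def InSobolev {n : ℕ} (k : ℝ) (u : (Fin n → ℤ) → ℂ) : Prop :=
  Summable fun ξ : Fin n → ℤ => (1 + l2normSq ξ) ^ k * ‖u ξ‖ ^ 2

/-- Polynomial growth of Fourier coefficients (a distribution on `𝕋ⁿ`). -/
def PolyGrowth {n : ℕ} (u : (Fin n → ℤ) → ℂ) : Prop :=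
  ∃ C N : ℝ, 0 < C ∧ 0 < N ∧
    ∀ ξ, ‖u ξ‖ ≤ C * (1 + Real.sqrt (l2normSq ξ)) ^ N

/-- Rapidly decreasing Fourier coefficients (a smooth function on `𝕋ⁿ`). -/
def RapidDecay {n : ℕ} (v : (Fin n → ℤ) → ℂ) : Prop :=
  ∀ N : ℝ, 0 < N → ∃ C : ℝ, 0 < C ∧
    ∀ ξ, ‖v ξ‖ ≤ C * (1 + Real.sqrt (l2normSq ξ)) ^ (-N)

/-- `p` is a symbol of order `m`. -/
def SymbolOrder {n : ℕ} (m : ℝ) (p : (Fin n → ℤ) → ℂ) : Prop :=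
  ∃ C : ℝ, 0 < C ∧ ∀ ξ, ‖p ξ‖ ≤ C * (1 + l2normSq ξ) ^ (m / 2)

/-- `p(D)` is globally hypoelliptic with loss of `r` derivatives (GH-`r`). -/
def GHr {n : ℕ} (m r : ℝ) (p : (Fin n → ℤ) → ℂ) : Prop :=
  ∀ (k : ℝ) (u : (Fin n → ℤ) → ℂ), PolyGrowth u →
    InSobolev k (fun ξ => p ξ * u ξ) → InSobolev (k + m - r) u

/-- `p(D)` is globally solvable with loss of `r` derivatives (GS-`r`). -/
def GSr {n : ℕ} (m r : ℝ) (p : (Fin n → ℤ) → ℂ) : Prop :=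
  ∀ (k : ℝ) (f : (Fin n → ℤ) → ℂ), InSobolev k f → (∀ ξ, p ξ = 0 → f ξ = 0) →
    ∃ u : (Fin n → ℤ) → ℂ, InSobolev (k + m - r) u ∧ ∀ ξ, p ξ * u ξ = f ξ

/-- `p(D)` is globally hypoelliptic (GH). -/
def GloballyHypoelliptic {n : ℕ} (p : (Fin n → ℤ) → ℂ) : Prop :=
  ∀ u : (Fin n → ℤ) → ℂ, PolyGrowth u →
    RapidDecay (fun ξ => p ξ * u ξ) → RapidDecay u

/-!
Write `w(ξ) = 1 + ‖ξ‖²`. Under GH-`r`, the set `T` where `‖p ξ‖ < w(ξ)^(-E)`, with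
`2E = r - m + n`, is finite: the indicator `1_T` has polynomial growth and `p · 1_T ∈ H^(r-m)`
because `w^(-n)` is summable over `ℤⁿ`, so GH-`r` puts `1_T` in `H^0`. In particular `p` has
finitely many zeros. Off `T` the quotient `f / p` grows at most polynomially, so GH-`r` applied to
`f / p` cut off on `T` gives a solution of `p u = f` in `H^(k+m-r)`. Conversely, GS-`r` implies
GH-`r` once the zero set is finite, since a solution `v` of `p v = p u` agrees with `u` off it.
-/

section Weight

variable {n : ℕ}

lemma l2normSq_nonneg (ξ : Fin n → ℤ) : 0 ≤ l2normSq ξ :=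
  Finset.sum_nonneg fun _ _ => sq_nonneg _

lemma one_le_one_add_l2normSq (ξ : Fin n → ℤ) : 1 ≤ 1 + l2normSq ξ :=
  le_add_of_nonneg_right (l2normSq_nonneg ξ)

lemma one_add_l2normSq_pos (ξ : Fin n → ℤ) : 0 < 1 + l2normSq ξ :=
  one_pos.trans_le (one_le_one_add_l2normSq ξ)

lemma one_add_l2normSq_rpow_pos (ξ : Fin n → ℤ) (s : ℝ) : 0 < (1 + l2normSq ξ) ^ s :=
  Real.rpow_pos_of_pos (one_add_l2normSq_pos ξ) s

lemma one_add_l2normSq_le_sq (ξ : Fin n → ℤ) :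
    1 + l2normSq ξ ≤ (1 + Real.sqrt (l2normSq ξ)) ^ 2 := by
  nlinarith [Real.sq_sqrt (l2normSq_nonneg ξ), Real.sqrt_nonneg (l2normSq ξ)]

end Weight

lemma summable_one_add_sq_inv_int : Summable fun x : ℤ => (1 + (x : ℝ) ^ 2)⁻¹ := by
  refine Summable.of_norm_bounded_eventually (Real.summable_one_div_int_pow.2 one_lt_two) ?_
  filter_upwards [(Set.finite_singleton (0 : ℤ)).eventually_cofinite_notMem] with x hx
  have hx : (0 : ℝ) < (x : ℝ) ^ 2 := by
    have : (x : ℝ) ≠ 0 := Int.cast_ne_zero.2 hx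
    positivity
  rw [Real.norm_of_nonneg (by positivity), one_div]
  exact inv_anti₀ hx (by linarith)

lemma summable_prod_apply_int {f : ℤ → ℝ} (hf₀ : ∀ x, 0 ≤ f x) (hf : Summable f) :
    ∀ n : ℕ, Summable fun ξ : Fin n → ℤ => ∏ j, f (ξ j)
  | 0 => .of_finite
  | n + 1 => by
    rw [← (Fin.consEquiv fun _ : Fin (n + 1) => ℤ).summable_iff]
    refine (hf.mul_of_nonneg (summable_prod_apply_int hf₀ hf n) hf₀
      fun ξ => Finset.prod_nonneg fun j _ => hf₀ _).congr ?_
    rintro ⟨x, ξ⟩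
    simp [Fin.prod_univ_succ]

lemma summable_one_add_l2normSq_rpow {n : ℕ} {s : ℝ} (hs : s ≤ -n) :
    Summable fun ξ : Fin n → ℤ => (1 + l2normSq ξ) ^ s := by
  refine .of_nonneg_of_le (fun ξ => (one_add_l2normSq_rpow_pos ξ s).le) (fun ξ => ?_)
    (summable_prod_apply_int (fun x => by positivity) summable_one_add_sq_inv_int n)
  have hcoord : ∀ j, 1 + (ξ j : ℝ) ^ 2 ≤ 1 + l2normSq ξ := fun j => by
    have := Finset.single_le_sum (f := fun j => (ξ j : ℝ) ^ 2) (fun _ _ => sq_nonneg _)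
      (Finset.mem_univ j)
    unfold l2normSq
    linarith
  calc (1 + l2normSq ξ) ^ s ≤ (1 + l2normSq ξ) ^ (-n : ℝ) :=
        Real.rpow_le_rpow_of_exponent_le (one_le_one_add_l2normSq ξ) hs
    _ = (∏ _j : Fin n, (1 + l2normSq ξ))⁻¹ := by
        rw [Real.rpow_neg (one_add_l2normSq_pos ξ).le, Real.rpow_natCast]; simp
    _ ≤ (∏ j, (1 + (ξ j : ℝ) ^ 2))⁻¹ :=
        inv_anti₀ (Finset.prod_pos fun _ _ => by positivity)
          (Finset.prod_le_prod (fun _ _ => by positivity) fun j _ => hcoord j)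
    _ = ∏ j, (1 + (ξ j : ℝ) ^ 2)⁻¹ := (Finset.prod_inv_distrib _).symm

section Sobolev

variable {n : ℕ} {k : ℝ} {u v : (Fin n → ℤ) → ℂ}

lemma InSobolev.of_norm_le (hu : InSobolev k u) (h : ∀ ξ, ‖v ξ‖ ≤ ‖u ξ‖) : InSobolev k v :=
  hu.of_nonneg_of_le (fun ξ => mul_nonneg (one_add_l2normSq_rpow_pos ξ k).le (sq_nonneg _))
    fun ξ => mul_le_mul_of_nonneg_left (pow_le_pow_left₀ (norm_nonneg _) (h ξ) 2)
      (one_add_l2normSq_rpow_pos ξ k).le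

lemma InSobolev.congr_of_finite (hu : InSobolev k u) {S : Set (Fin n → ℤ)} (hS : S.Finite)
    (h : ∀ ξ ∉ S, u ξ = v ξ) : InSobolev k v :=
  Summable.congr_cofinite hu (hS.eventually_cofinite_notMem.mono fun ξ hξ => by simp [h ξ hξ])

lemma inSobolev_of_norm_le_rpow {a : ℝ} (h : ∀ ξ, ‖v ξ‖ ≤ (1 + l2normSq ξ) ^ a)
    (hka : k + 2 * a ≤ -n) : InSobolev k v := by
  refine (summable_one_add_l2normSq_rpow hka).of_nonneg_of_le
    (fun ξ => mul_nonneg (one_add_l2normSq_rpow_pos ξ k).le (sq_nonneg _)) fun ξ => ?_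
  have hw := one_add_l2normSq_pos ξ
  calc (1 + l2normSq ξ) ^ k * ‖v ξ‖ ^ 2 ≤ (1 + l2normSq ξ) ^ k * ((1 + l2normSq ξ) ^ a) ^ 2 :=
        mul_le_mul_of_nonneg_left (pow_le_pow_left₀ (norm_nonneg _) (h ξ) 2)
          (one_add_l2normSq_rpow_pos ξ k).le
    _ = (1 + l2normSq ξ) ^ (k + 2 * a) := by
        rw [← Real.rpow_natCast, ← Real.rpow_mul hw.le, Real.rpow_add hw]; norm_num [mul_comm]

lemma InSobolev.exists_norm_le (hu : InSobolev k u) :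
    ∃ C, 0 ≤ C ∧ ∀ ξ, ‖u ξ‖ ≤ C * (1 + l2normSq ξ) ^ (-k / 2) := by
  refine ⟨Real.sqrt (∑' ξ, (1 + l2normSq ξ) ^ k * ‖u ξ‖ ^ 2), Real.sqrt_nonneg _, fun ξ => ?_⟩
  have hw := one_add_l2normSq_pos ξ
  have hterm : (1 + l2normSq ξ) ^ k * ‖u ξ‖ ^ 2 ≤ ∑' ξ, (1 + l2normSq ξ) ^ k * ‖u ξ‖ ^ 2 :=
    hu.le_tsum ξ fun ζ _ => mul_nonneg (one_add_l2normSq_rpow_pos ζ k).le (sq_nonneg _)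
  calc ‖u ξ‖ = Real.sqrt ((1 + l2normSq ξ) ^ (-k) * ((1 + l2normSq ξ) ^ k * ‖u ξ‖ ^ 2)) := by
        rw [← mul_assoc, ← Real.rpow_add hw, neg_add_cancel, Real.rpow_zero, one_mul,
          Real.sqrt_sq (norm_nonneg _)]
    _ ≤ Real.sqrt ((1 + l2normSq ξ) ^ (-k) * ∑' ξ, (1 + l2normSq ξ) ^ k * ‖u ξ‖ ^ 2) := by
        gcongr
    _ = _ := by
        rw [Real.sqrt_mul (one_add_l2normSq_rpow_pos ξ _).le, mul_comm,
          Real.sqrt_eq_rpow (_ ^ (-k)), ← Real.rpow_mul hw.le]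
        ring_nf

end Sobolev

lemma polyGrowth_of_norm_le_rpow {n : ℕ} {u : (Fin n → ℤ) → ℂ} {C a : ℝ} (hC : 0 ≤ C)
    (h : ∀ ξ, ‖u ξ‖ ≤ C * (1 + l2normSq ξ) ^ a) : PolyGrowth u := by
  refine ⟨C + 1, 2 * |a| + 1, by positivity, by positivity, fun ξ => ?_⟩
  have hbase : 1 ≤ 1 + Real.sqrt (l2normSq ξ) := le_add_of_nonneg_right (Real.sqrt_nonneg _)
  calc ‖u ξ‖ ≤ C * (1 + l2normSq ξ) ^ a := h ξ
    _ ≤ (C + 1) * (1 + l2normSq ξ) ^ |a| :=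
        mul_le_mul (by linarith)
          (Real.rpow_le_rpow_of_exponent_le (one_le_one_add_l2normSq ξ) (le_abs_self a))
          (one_add_l2normSq_rpow_pos ξ a).le (by linarith)
    _ ≤ (C + 1) * ((1 + Real.sqrt (l2normSq ξ)) ^ 2) ^ |a| := by
        gcongr
        · exact (one_add_l2normSq_pos ξ).le
        · exact one_add_l2normSq_le_sq ξ
    _ = (C + 1) * (1 + Real.sqrt (l2normSq ξ)) ^ (2 * |a|) := by
        rw [← Real.rpow_natCast, ← Real.rpow_mul (by linarith)]; norm_num
    _ ≤ (C + 1) * (1 + Real.sqrt (l2normSq ξ)) ^ (2 * |a| + 1) :=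
        mul_le_mul_of_nonneg_left
          (Real.rpow_le_rpow_of_exponent_le hbase (by linarith)) (by linarith)

lemma finite_of_inSobolev_zero_indicator {n : ℕ} {S : Set (Fin n → ℤ)}
    (h : InSobolev 0 (S.indicator fun _ => (1 : ℂ))) : S.Finite := by
  have hS : Summable fun _ : S => (1 : ℝ) :=
    (h.comp_injective Subtype.val_injective).congr fun ξ => by simp
  exact Set.finite_coe_iff.1 (Finite.of_summable_const one_pos hS)

namespace GHr

variable {n : ℕ} {m r : ℝ} {p : (Fin n → ℤ) → ℂ}

lemma finite_of_inSobolev_mul_indicator (h : GHr m r p) {S : Set (Fin n → ℤ)}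
    (hS : InSobolev (r - m) fun ξ => p ξ * S.indicator (fun _ => 1) ξ) : S.Finite := by
  have hind := h (r - m) _ (polyGrowth_of_norm_le_rpow (a := 0) zero_le_one fun ξ => by
    by_cases hξ : ξ ∈ S <;> simp [hξ]) hS
  rw [sub_add_cancel, sub_self] at hind
  exact finite_of_inSobolev_zero_indicator hind

lemma finite_norm_lt (h : GHr m r p) :
    {ξ | ‖p ξ‖ < (1 + l2normSq ξ) ^ (-(r - m + n) / 2)}.Finite := by
  refine h.finite_of_inSobolev_mul_indicator
    (inSobolev_of_norm_le_rpow (a := -(r - m + n) / 2) (fun ξ => ?_) (by linarith))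
  by_cases hξ : ξ ∈ {ξ | ‖p ξ‖ < (1 + l2normSq ξ) ^ (-(r - m + n) / 2)}
  · rw [Set.indicator_of_mem hξ, mul_one]
    exact hξ.le
  · simp only [Set.indicator_of_notMem hξ, mul_zero, norm_zero]
    exact (one_add_l2normSq_rpow_pos ξ _).le

lemma finite_zeros (h : GHr m r p) : {ξ | p ξ = 0}.Finite :=
  h.finite_norm_lt.subset fun ξ (hξ : p ξ = 0) => by
    simpa [hξ] using one_add_l2normSq_rpow_pos ξ _

lemma toGSr (h : GHr m r p) : GSr m r p := by
  intro k f hf hker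
  set T := {ξ | ‖p ξ‖ < (1 + l2normSq ξ) ^ (-(r - m + n) / 2)}
  -- `f ξ / p ξ = 0` where `p ξ = 0`, matching `f ξ = 0` there.
  have hsol : ∀ ξ, p ξ * (f ξ / p ξ) = f ξ := fun ξ => by
    by_cases hp : p ξ = 0
    · simp [hp, hker ξ hp]
    · exact mul_div_cancel₀ _ hp
  obtain ⟨C, hC, hfC⟩ := hf.exists_norm_le
  have hgrowth : PolyGrowth (Tᶜ.indicator fun ξ => f ξ / p ξ) := by
    refine polyGrowth_of_norm_le_rpow hC (a := -k / 2 + (r - m + n) / 2) fun ξ => ?_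
    have hw := one_add_l2normSq_pos ξ
    by_cases hξ : ξ ∈ T
    · simp only [Set.indicator_of_notMem (Set.notMem_compl_iff.2 hξ), norm_zero]; positivity
    · have hlow : (1 + l2normSq ξ) ^ (-(r - m + n) / 2) ≤ ‖p ξ‖ := not_lt.1 hξ
      rw [Set.indicator_of_mem hξ, norm_div,
        div_le_iff₀ ((one_add_l2normSq_rpow_pos ξ _).trans_le hlow)]
      calc ‖f ξ‖ ≤ C * (1 + l2normSq ξ) ^ (-k / 2) := hfC ξ
        _ = C * (1 + l2normSq ξ) ^ (-k / 2 + (r - m + n) / 2)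
              * (1 + l2normSq ξ) ^ (-(r - m + n) / 2) := by
            rw [mul_assoc, ← Real.rpow_add hw]; ring_nf
        _ ≤ _ := by gcongr
  have hrhs : InSobolev k fun ξ => p ξ * Tᶜ.indicator (fun ξ => f ξ / p ξ) ξ :=
    hf.of_norm_le fun ξ => by
      by_cases hξ : ξ ∈ Tᶜ
      · rw [Set.indicator_of_mem hξ, hsol]
      · simp [Set.indicator_of_notMem hξ]
  exact ⟨_, (h k _ hgrowth hrhs).congr_of_finite h.finite_norm_lt
    fun ξ hξ => Set.indicator_of_mem hξ _, hsol⟩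

end GHr

lemma GSr.toGHr {n : ℕ} {m r : ℝ} {p : (Fin n → ℤ) → ℂ} (hZ : {ξ | p ξ = 0}.Finite)
    (h : GSr m r p) : GHr m r p := by
  intro k u _ hpu
  obtain ⟨v, hv, hpv⟩ := h k _ hpu fun ξ hξ => by simp [hξ]
  exact hv.congr_of_finite hZ fun ξ hξ => mul_left_cancel₀ hξ (hpv ξ)

theorem stmt_8_general {n : ℕ} (m r : ℝ)
    (p : (Fin n → ℤ) → ℂ) :
    (GHr m r p → GSr m r p) ∧
    ({ξ : Fin n → ℤ | p ξ = 0}.Finite → (GHr m r p ↔ GSr m r p)) ∧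
    ((∃ r₀ : ℝ, 0 ≤ r₀ ∧ GHr m r₀ p) →
      ∀ s : ℝ, 0 ≤ s → (GHr m s p ↔ GSr m s p)) := by
  refine ⟨GHr.toGSr, fun hZ => ⟨GHr.toGSr, GSr.toGHr hZ⟩, ?_⟩
  rintro ⟨r₀, -, h₀⟩ s -
  exact ⟨GHr.toGSr, GSr.toGHr h₀.finite_zeros⟩

theorem stmt_8 {n : ℕ} (hn : 1 ≤ n) (m r : ℝ) (hr : 0 ≤ r)
    (p : (Fin n → ℤ) → ℂ) (hp : SymbolOrder m p) :
    (GHr m r p → GSr m r p) ∧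
    ({ξ : Fin n → ℤ | p ξ = 0}.Finite → (GHr m r p ↔ GSr m r p)) ∧
    ((∃ r₀ : ℝ, 0 ≤ r₀ ∧ GHr m r₀ p) →
      ∀ s : ℝ, 0 ≤ s → (GHr m s p ↔ GSr m s p)) :=
  stmt_8_general m r p
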